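/- arXiv:1510.02302 — 7 statements merged into one kernel-verified Lean document; each statement's English description precedes it below -/
import Mathlib

section
/- Let Ω = C([0,∞), ℝ^d) with the topology of uniform convergence on compact sets and its Borel σ-algebra, θ_τ the shift maps, f : ℝ^d → ℝ continuous with 0 < f(x) ≤ M for all x, and Φ : Ω → Ω the time-change map Φ(ω) = ω ∘ φ_ω. Let μ be a probability measure on Ω such that θ_τ is measure-preserving for μ for every τ ≥ 0, and assume q₀ := ∫_Ω 1/f(ω(0)) dμ(ω) < ∞. Then Φ is Borel measurable, and the measure P' defined as the pushforward under Φ of the measure with density ω ↦ q₀⁻¹/f(ω(0)) with respect to μ is a probability measure on Ω which is invariant under θ_τ for every τ ≥ 0 (i.e., the time-changed process Z = Φ(Y) is stationary under P'). -/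
/-!
Let `S_v ω = θ_{φ_ω(v)} ω`. The time change intertwines the two flows, `θ_τ ∘ Φ = Φ ∘ S_τ`,
so it suffices that every `S_τ` preserves `ν = (1/f(ω 0)) · μ`. For `0 ≤ g ≤ 1`, shift
invariance of `μ` and the substitution `x = v + ψ_ω(s)` give
`T · ∫ g(S_v ω) dν(ω) = ∫ ∫_{[v, v + ψ_ω(T)]} g(S_x ω) dx dμ(ω)`. Moving `v` only slides the
window `[v, v + ψ_ω(T)]`, which changes the right side by at most `|v - v'|`; dividing by
`T → ∞` shows that `∫ g ∘ S_v dν` does not depend on `v`. Measurability of `Φ` comes from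
continuity: the inverse `φ` of the jointly continuous, strictly increasing clock `ψ` is jointly
continuous.
-/

open MeasureTheory Set Filter Topology
open scoped NNReal

noncomputable section

/-- The path space `Ω = C([0,∞), ℝ^d)` with the compact-open topology (which coincides
with the topology of uniform convergence on compact sets since `[0,∞)` is locally
compact). -/
abbrev PathSpace (d : ℕ) := C(ℝ≥0, EuclideanSpace ℝ (Fin d))

/-- Borel σ-algebra on the path space. -/
instance (d : ℕ) : MeasurableSpace (PathSpace d) := borel _

instance (d : ℕ) : BorelSpace (PathSpace d) := ⟨rfl⟩

/-- The shift map `(θ_τ ω)(t) = ω(t + τ)`. -/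
def pathShift (d : ℕ) (τ : ℝ≥0) (ω : PathSpace d) : PathSpace d :=
  ω.comp ⟨fun t => t + τ, by exact continuous_id.add continuous_const⟩

/-- `ψ_ω(t) = ∫₀ᵗ 1/f(ω(s)) ds`. -/
def psi (d : ℕ) (f : EuclideanSpace ℝ (Fin d) → ℝ) (ω : PathSpace d) (t : ℝ) : ℝ :=
  ∫ s in (0:ℝ)..t, 1 / f (ω s.toNNReal)

open scoped ENNReal

theorem continuous_uncurry_of_strictMono_of_apply_eq {X Y α β : Type*} [TopologicalSpace X]
    [TopologicalSpace Y] [LinearOrder α] [TopologicalSpace α] [OrderTopology α]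
    [LinearOrder β] [TopologicalSpace β] [OrderClosedTopology β]
    {g : X → α → β} {h : X → Y → α} {e : Y → β}
    (hg : ∀ a, Continuous fun x => g x a) (hmono : ∀ x, StrictMono (g x)) (he : Continuous e)
    (hgh : ∀ x y, g x (h x y) = e y) : Continuous (Function.uncurry h) := by
  refine continuous_iff_continuousAt.2 fun p => tendsto_order.2 ⟨fun a ha => ?_, fun a ha => ?_⟩
  · have hp : g p.1 a < e p.2 := hgh p.1 p.2 ▸ hmono p.1 ha
    filter_upwards [(isOpen_lt ((hg a).comp continuous_fst)
      (he.comp continuous_snd)).mem_nhds hp] with q hq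
    exact show a < h q.1 q.2 from (hmono q.1).lt_iff_lt.1 (by rwa [hgh])
  · have hp : e p.2 < g p.1 a := hgh p.1 p.2 ▸ hmono p.1 ha
    filter_upwards [(isOpen_lt (he.comp continuous_snd)
      ((hg a).comp continuous_fst)).mem_nhds hp] with q hq
    exact show h q.1 q.2 < a from (hmono q.1).lt_iff_lt.1 (by rwa [hgh])

theorem MeasureTheory.setLIntegral_le_setLIntegral_add_measure_of_subset_union {α : Type*}
    [MeasurableSpace α] {μ : Measure α} {G : α → ℝ≥0∞} (hG : ∀ x, G x ≤ 1) {s t u : Set α}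
    (hs : s ⊆ t ∪ u) : ∫⁻ x in s, G x ∂μ ≤ ∫⁻ x in t, G x ∂μ + μ u :=
  calc ∫⁻ x in s, G x ∂μ ≤ ∫⁻ x in t ∪ u, G x ∂μ := lintegral_mono_set hs
    _ ≤ ∫⁻ x in t, G x ∂μ + ∫⁻ x in u, G x ∂μ := lintegral_union_le _ _ _
    _ ≤ ∫⁻ x in t, G x ∂μ + ∫⁻ _ in u, 1 ∂μ := by gcongr with x; exact hG x
    _ = ∫⁻ x in t, G x ∂μ + μ u := by rw [setLIntegral_one]

theorem MeasureTheory.setLIntegral_Icc_le_setLIntegral_Icc_add {G : ℝ → ℝ≥0∞}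
    (hG : ∀ x, G x ≤ 1) (a b c : ℝ) :
    ∫⁻ x in Icc a (a + c), G x ≤ (∫⁻ x in Icc b (b + c), G x) + ENNReal.ofReal |a - b| := by
  rcases le_total a b with hab | hba
  · rw [abs_sub_comm, abs_of_nonneg (sub_nonneg.2 hab), ← Real.volume_Icc]
    refine setLIntegral_le_setLIntegral_add_measure_of_subset_union hG ?_
    intro x hx
    rcases lt_or_ge x b with hxb | hbx
    · exact Or.inr ⟨hx.1, hxb.le⟩
    · exact Or.inl ⟨hbx, by linarith [hx.2]⟩
  · rw [abs_of_nonneg (sub_nonneg.2 hba), ← add_sub_add_right_eq_sub a b c,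
      ← Real.volume_Icc]
    refine setLIntegral_le_setLIntegral_add_measure_of_subset_union hG ?_
    intro x hx
    rcases le_or_gt x (b + c) with hxb | hbx
    · exact Or.inl ⟨hba.trans hx.1, hxb⟩
    · exact Or.inr ⟨hbx.le, hx.2⟩

theorem ENNReal.le_of_forall_natCast_mul_le_mul_add {a b c : ℝ≥0∞} (hc : c ≠ ∞)
    (h : ∀ n : ℕ, (n : ℝ≥0∞) * a ≤ n * b + c) : a ≤ b := by
  refine ENNReal.le_of_forall_pos_le_add fun ε hε _ => ?_
  obtain ⟨n, hn⟩ := ENNReal.exists_nat_mul_gt (ENNReal.coe_ne_zero.2 hε.ne') hc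
  have hn0 : (n : ℝ≥0∞) ≠ 0 := by rintro h0; simp [h0] at hn
  refine (ENNReal.mul_le_mul_iff_right hn0 (ENNReal.natCast_ne_top n)).1 ?_
  calc (n : ℝ≥0∞) * a ≤ n * b + c := h n
    _ ≤ n * b + n * ε := by gcongr
    _ = n * (b + ε) := (mul_add _ _ _).symm

theorem MeasureTheory.isProbabilityMeasure_withDensity_ofReal_inv_integral_mul {α : Type*}
    [MeasurableSpace α] {μ : Measure α} {g : α → ℝ} (hg : Integrable g μ) (hg0 : 0 ≤ g)
    (hpos : 0 < ∫ x, g x ∂μ) :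
    IsProbabilityMeasure (μ.withDensity fun x => ENNReal.ofReal ((∫ y, g y ∂μ)⁻¹ * g x)) := by
  constructor
  rw [withDensity_apply _ MeasurableSet.univ, Measure.restrict_univ,
    ← ofReal_integral_eq_lintegral_ofReal (hg.const_mul _)
      (ae_of_all _ fun x => mul_nonneg (inv_nonneg.2 hpos.le) (hg0 x)),
    integral_const_mul, inv_mul_cancel₀ hpos.ne', ENNReal.ofReal_one]

section TimeChangedPath

variable {d : ℕ}

theorem pathShift_apply (τ : ℝ≥0) (ω : PathSpace d) (t : ℝ≥0) :
    pathShift d τ ω t = ω (t + τ) := rfl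

theorem pathShift_zero (ω : PathSpace d) : pathShift d 0 ω = ω := by
  ext t; simp [pathShift_apply]

theorem pathShift_pathShift (a b : ℝ≥0) (ω : PathSpace d) :
    pathShift d a (pathShift d b ω) = pathShift d (a + b) ω := by
  ext t; simp [pathShift_apply, add_assoc]

theorem continuous_pathShift_uncurry :
    Continuous fun p : ℝ≥0 × PathSpace d => pathShift d p.1 p.2 := by
  let add : C(ℝ≥0 × ℝ≥0, ℝ≥0) := ⟨fun q => q.2 + q.1, by fun_prop⟩
  exact ContinuousMap.continuous_comp'.comp
    ((add.curry.continuous.comp continuous_fst).prodMk continuous_snd)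

theorem continuous_pathShift (τ : ℝ≥0) : Continuous (pathShift d τ) :=
  continuous_pathShift_uncurry.comp (continuous_const.prodMk continuous_id)

section Psi

variable {f : EuclideanSpace ℝ (Fin d) → ℝ}

theorem psi_nonneg (hf_pos : ∀ x, 0 < f x) (ω : PathSpace d) {t : ℝ} (ht : 0 ≤ t) :
    0 ≤ psi d f ω t :=
  intervalIntegral.integral_nonneg ht fun _ _ => (one_div_pos.2 (hf_pos _)).le

variable (hf : Continuous f) (hf_pos : ∀ x, 0 < f x)
include hf hf_pos

theorem continuous_one_div_comp_path_uncurry :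
    Continuous fun p : PathSpace d × ℝ => 1 / f (p.1 p.2.toNNReal) :=
  continuous_const.div (hf.comp (continuous_eval.comp
    (continuous_fst.prodMk (continuous_real_toNNReal.comp continuous_snd))))
    fun _ => (hf_pos _).ne'

theorem continuous_one_div_comp_path (ω : PathSpace d) :
    Continuous fun s : ℝ => 1 / f (ω s.toNNReal) :=
  (continuous_one_div_comp_path_uncurry hf hf_pos).comp (continuous_const.prodMk continuous_id)

theorem psi_sub_psi (ω : PathSpace d) (a b : ℝ) :
    psi d f ω b - psi d f ω a = ∫ s in a..b, 1 / f (ω s.toNNReal) :=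
  intervalIntegral.integral_interval_sub_left
    ((continuous_one_div_comp_path hf hf_pos ω).intervalIntegrable _ _)
    ((continuous_one_div_comp_path hf hf_pos ω).intervalIntegrable _ _)

theorem hasDerivAt_psi (ω : PathSpace d) (t : ℝ) :
    HasDerivAt (psi d f ω) (1 / f (ω t.toNNReal)) t :=
  ((continuous_one_div_comp_path hf hf_pos ω).integral_hasStrictDerivAt 0 t).hasDerivAt

theorem continuous_psi (ω : PathSpace d) : Continuous (psi d f ω) :=
  continuous_iff_continuousAt.2 fun t => (hasDerivAt_psi hf hf_pos ω t).continuousAt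

theorem psi_strictMono (ω : PathSpace d) : StrictMono (psi d f ω) :=
  strictMono_of_hasDerivAt_pos (hasDerivAt_psi hf hf_pos ω) fun _ => one_div_pos.2 (hf_pos _)

theorem continuous_psi_left (t : ℝ) : Continuous fun ω : PathSpace d => psi d f ω t :=
  intervalIntegral.continuous_parametric_intervalIntegral_of_continuous'
    (continuous_one_div_comp_path_uncurry hf hf_pos) 0 t

theorem psi_add_of_nonneg (ω : PathSpace d) (σ : ℝ≥0) {t : ℝ} (ht : 0 ≤ t) :
    psi d f ω (t + σ) = psi d f (pathShift d σ ω) t + psi d f ω σ := by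
  have hshift :
      ∫ s in (σ : ℝ)..t + σ, 1 / f (ω s.toNNReal) = psi d f (pathShift d σ ω) t := by
    have h := intervalIntegral.integral_comp_add_right (fun s => 1 / f (ω s.toNNReal)) (σ : ℝ)
      (a := 0) (b := t)
    rw [zero_add] at h
    rw [← h]
    refine intervalIntegral.integral_congr fun s hs => ?_
    rw [uIcc_of_le ht] at hs
    simp only [pathShift_apply, Real.toNNReal_add hs.1 σ.coe_nonneg, Real.toNNReal_coe]
  linarith [psi_sub_psi hf hf_pos ω σ (t + σ)]

theorem setLIntegral_Icc_comp_add_psi (ω : PathSpace d) (G : ℝ → ℝ≥0∞) (T v : ℝ) :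
    ∫⁻ s in Icc 0 T, ENNReal.ofReal (1 / f (ω s.toNNReal)) * G (v + psi d f ω s) =
      ∫⁻ x in Icc v (v + psi d f ω T), G x := by
  have hmono : StrictMono fun s => v + psi d f ω s := (psi_strictMono hf hf_pos ω).const_add v
  have himage : (fun s => v + psi d f ω s) '' Icc 0 T = Icc v (v + psi d f ω T) := by
    rw [Continuous.image_Icc_of_strictMono (f := fun s => v + psi d f ω s)
      (continuous_const.add (continuous_psi hf hf_pos ω)) hmono,
      psi, intervalIntegral.integral_same, add_zero]
  rw [← himage, lintegral_image_eq_lintegral_abs_deriv_mul measurableSet_Icc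
    (fun s _ => ((hasDerivAt_psi hf hf_pos ω s).const_add v).hasDerivWithinAt)
    hmono.injective.injOn]
  refine setLIntegral_congr_fun measurableSet_Icc fun s _ => ?_
  rw [abs_of_pos (one_div_pos.2 (hf_pos _))]

end Psi

section TimeChange

variable {f : EuclideanSpace ℝ (Fin d) → ℝ} {φ : PathSpace d → ℝ≥0 → ℝ≥0}

/-- `S_v ω = θ_{φ_ω(v)} ω`, the shift by `v` of the time-changed path, read back on `ω`;
negative `v` act as `0`. -/
def timeChangeShift (φ : PathSpace d → ℝ≥0 → ℝ≥0) (v : ℝ) (ω : PathSpace d) : PathSpace d :=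
  pathShift d (φ ω v.toNNReal) ω

variable (hf : Continuous f) (hf_pos : ∀ x, 0 < f x)
  (hφ : ∀ ω (t : ℝ≥0), psi d f ω (φ ω t) = (t : ℝ))
include hf hf_pos hφ

theorem continuous_phi_uncurry : Continuous fun p : PathSpace d × ℝ≥0 => φ p.1 p.2 :=
  continuous_induced_rng.2 <| continuous_uncurry_of_strictMono_of_apply_eq
    (continuous_psi_left hf hf_pos) (psi_strictMono hf hf_pos) NNReal.continuous_coe hφ

theorem continuous_timeChangeShift_uncurry :
    Continuous fun p : ℝ × PathSpace d => timeChangeShift φ p.1 p.2 :=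
  continuous_pathShift_uncurry.comp <| ((continuous_phi_uncurry hf hf_pos hφ).comp
    (continuous_snd.prodMk (continuous_real_toNNReal.comp continuous_fst))).prodMk
    continuous_snd

theorem measurable_timeChangeShift (v : ℝ) : Measurable (timeChangeShift φ v) :=
  ((continuous_timeChangeShift_uncurry hf hf_pos hφ).comp
    (continuous_const.prodMk continuous_id)).measurable

theorem phi_zero (ω : PathSpace d) : φ ω 0 = 0 :=
  NNReal.coe_injective <| (psi_strictMono hf hf_pos ω).injective <| by
    rw [hφ, NNReal.coe_zero, psi, intervalIntegral.integral_same]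

theorem timeChangeShift_zero (ω : PathSpace d) : timeChangeShift φ 0 ω = ω := by
  rw [timeChangeShift, Real.toNNReal_zero, phi_zero hf hf_pos hφ, pathShift_zero]

theorem phi_pathShift_add (ω : PathSpace d) {s u : ℝ≥0} (hsu : psi d f ω s = u) (t : ℝ≥0) :
    φ (pathShift d s ω) t + s = φ ω (t + u) := by
  refine NNReal.coe_injective ((psi_strictMono hf hf_pos ω).injective ?_)
  rw [NNReal.coe_add, psi_add_of_nonneg hf hf_pos ω s (φ _ t).coe_nonneg, hφ, hφ, hsu,
    NNReal.coe_add]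

theorem timeChangeShift_pathShift (ω : PathSpace d) {s v : ℝ} (hs : 0 ≤ s) (hv : 0 ≤ v) :
    timeChangeShift φ v (pathShift d s.toNNReal ω) = timeChangeShift φ (v + psi d f ω s) ω := by
  have hψ := psi_nonneg hf_pos ω hs
  rw [timeChangeShift, timeChangeShift, pathShift_pathShift,
    phi_pathShift_add hf hf_pos hφ ω (u := (psi d f ω s).toNNReal)
      (by rw [Real.coe_toNNReal _ hs, Real.coe_toNNReal _ hψ]),
    Real.toNNReal_add hv hψ]

theorem semiconj_timeChangeShift {Φ : PathSpace d → PathSpace d}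
    (hΦ : ∀ ω (t : ℝ≥0), Φ ω t = ω (φ ω t)) (τ : ℝ≥0) :
    Function.Semiconj Φ (timeChangeShift φ τ) (pathShift d τ) := fun ω => by
  ext t
  simp only [timeChangeShift, Real.toNNReal_coe, pathShift_apply, hΦ]
  rw [phi_pathShift_add hf hf_pos hφ ω (hφ ω τ)]

theorem continuous_of_apply_eq_comp_phi {Φ : PathSpace d → PathSpace d}
    (hΦ : ∀ ω (t : ℝ≥0), Φ ω t = ω (φ ω t)) : Continuous Φ := by
  let φc : C(PathSpace d × ℝ≥0, ℝ≥0) := ⟨_, continuous_phi_uncurry hf hf_pos hφ⟩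
  have hΦc : Φ = fun ω => ω.comp (φc.curry ω) := funext fun ω => ContinuousMap.ext (hΦ ω)
  rw [hΦc]
  exact ContinuousMap.continuous_comp'.comp (φc.curry.continuous.prodMk continuous_id)

end TimeChange

section Stationarity

variable {f : EuclideanSpace ℝ (Fin d) → ℝ} {φ : PathSpace d → ℝ≥0 → ℝ≥0}

def invSpeedAtZero (f : EuclideanSpace ℝ (Fin d) → ℝ) (ω : PathSpace d) : ℝ≥0∞ :=
  ENNReal.ofReal (1 / f (ω 0))

theorem measurable_invSpeedAtZero (hf : Continuous f) (hf_pos : ∀ x, 0 < f x) :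
    Measurable (invSpeedAtZero (d := d) f) :=
  ENNReal.measurable_ofReal.comp (continuous_const.div (hf.comp (continuous_eval_const 0))
    fun _ => (hf_pos _).ne').measurable

theorem invSpeedAtZero_pathShift (s : ℝ≥0) (ω : PathSpace d) :
    invSpeedAtZero f (pathShift d s ω) = ENNReal.ofReal (1 / f (ω s)) := by
  simp [invSpeedAtZero, pathShift_apply]

variable (hf : Continuous f) (hf_pos : ∀ x, 0 < f x)
  (hφ : ∀ ω (t : ℝ≥0), psi d f ω (φ ω t) = (t : ℝ))
  {μ : Measure (PathSpace d)} (hshift : ∀ τ : ℝ≥0, MeasurePreserving (pathShift d τ) μ μ)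
include hf hf_pos hφ hshift

/-- Average over the original times `s ∈ [0, T]` using the shift invariance of `μ`, then
substitute `x = v + ψ_ω(s)` path by path: the density `1/f(ω 0)`, shifted to time `s`, is
exactly the Jacobian `ψ_ω'(s)`. -/
theorem ofReal_mul_lintegral_timeChangeShift_mul_invSpeedAtZero [SFinite μ]
    {g : PathSpace d → ℝ≥0∞} (hg : Measurable g) {v T : ℝ} (hv : 0 ≤ v) :
    ENNReal.ofReal T * ∫⁻ ω, g (timeChangeShift φ v ω) * invSpeedAtZero f ω ∂μ =
      ∫⁻ ω, (∫⁻ x in Icc v (v + psi d f ω T), g (timeChangeShift φ x ω)) ∂μ := by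
  set F : PathSpace d → ℝ≥0∞ := fun ω => g (timeChangeShift φ v ω) * invSpeedAtZero f ω
  have hF : Measurable F := (hg.comp (measurable_timeChangeShift hf hf_pos hφ v)).mul
    (measurable_invSpeedAtZero hf hf_pos)
  have hθ : Continuous fun p : ℝ × PathSpace d => pathShift d p.1.toNNReal p.2 :=
    continuous_pathShift_uncurry.comp
      ((continuous_real_toNNReal.comp continuous_fst).prodMk continuous_snd)
  calc ENNReal.ofReal T * ∫⁻ ω, F ω ∂μ = ∫⁻ _ in Icc 0 T, ∫⁻ ω, F ω ∂μ := by
        rw [setLIntegral_const, Real.volume_Icc, sub_zero, mul_comm]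
    _ = ∫⁻ s in Icc 0 T, ∫⁻ ω, F (pathShift d s.toNNReal ω) ∂μ := by
        simp_rw [(hshift _).lintegral_comp hF]
    _ = ∫⁻ ω, (∫⁻ s in Icc 0 T, F (pathShift d s.toNNReal ω)) ∂μ :=
        lintegral_lintegral_swap (hF.comp hθ.measurable).aemeasurable
    _ = ∫⁻ ω, (∫⁻ s in Icc 0 T, ENNReal.ofReal (1 / f (ω s.toNNReal)) *
          g (timeChangeShift φ (v + psi d f ω s) ω)) ∂μ := by
        refine lintegral_congr fun ω => setLIntegral_congr_fun measurableSet_Icc fun s hs => ?_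
        simp only [F]
        rw [timeChangeShift_pathShift hf hf_pos hφ ω hs.1 hv,
          invSpeedAtZero_pathShift, mul_comm]
    _ = _ := lintegral_congr fun ω =>
        setLIntegral_Icc_comp_add_psi hf hf_pos ω (fun x => g (timeChangeShift φ x ω)) T v

theorem lintegral_timeChangeShift_mul_invSpeedAtZero_le [IsFiniteMeasure μ]
    {g : PathSpace d → ℝ≥0∞} (hg : Measurable g) (hg1 : ∀ ω, g ω ≤ 1) {v v' : ℝ}
    (hv : 0 ≤ v) (hv' : 0 ≤ v') :
    ∫⁻ ω, g (timeChangeShift φ v ω) * invSpeedAtZero f ω ∂μ ≤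
      ∫⁻ ω, g (timeChangeShift φ v' ω) * invSpeedAtZero f ω ∂μ := by
  refine ENNReal.le_of_forall_natCast_mul_le_mul_add
    (ENNReal.mul_ne_top (ENNReal.ofReal_ne_top (r := |v - v'|)) (measure_ne_top μ univ))
    fun n => ?_
  rw [← ENNReal.ofReal_natCast,
    ofReal_mul_lintegral_timeChangeShift_mul_invSpeedAtZero hf hf_pos hφ hshift hg hv,
    ofReal_mul_lintegral_timeChangeShift_mul_invSpeedAtZero hf hf_pos hφ hshift hg hv']
  calc _ ≤ ∫⁻ ω, ((∫⁻ x in Icc v' (v' + psi d f ω n), g (timeChangeShift φ x ω)) +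
          ENNReal.ofReal |v - v'|) ∂μ :=
        lintegral_mono fun ω =>
          setLIntegral_Icc_le_setLIntegral_Icc_add (fun _ => hg1 _) _ _ _
    _ = _ := by rw [lintegral_add_right _ measurable_const, lintegral_const]

theorem measurePreserving_timeChangeShift_withDensity [IsFiniteMeasure μ] {τ : ℝ}
    (hτ : 0 ≤ τ) :
    MeasurePreserving (timeChangeShift φ τ) (μ.withDensity (invSpeedAtZero f))
      (μ.withDensity (invSpeedAtZero f)) := by
  have hS := measurable_timeChangeShift hf hf_pos hφ
  have hpreimage : ∀ v {B}, MeasurableSet B → μ.withDensity (invSpeedAtZero f)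
      (timeChangeShift φ v ⁻¹' B) =
        ∫⁻ ω, B.indicator 1 (timeChangeShift φ v ω) * invSpeedAtZero f ω ∂μ := by
    intro v B hB
    rw [withDensity_apply _ (hS v hB), ← lintegral_indicator (hS v hB)]
    refine lintegral_congr fun ω => ?_
    by_cases h : timeChangeShift φ v ω ∈ B <;> simp [h]
  refine ⟨hS τ, Measure.ext fun B hB => ?_⟩
  have hB0 : timeChangeShift φ 0 ⁻¹' B = B := by
    ext ω; simp [timeChangeShift_zero hf hf_pos hφ]
  have hg1 : ∀ ω, B.indicator 1 ω ≤ (1 : ℝ≥0∞) := fun ω => by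
    by_cases h : ω ∈ B <;> simp [h]
  rw [Measure.map_apply (hS τ) hB, hpreimage τ hB]
  conv_rhs => rw [← hB0, hpreimage 0 hB]
  exact le_antisymm
    (lintegral_timeChangeShift_mul_invSpeedAtZero_le hf hf_pos hφ hshift
      (measurable_one.indicator hB) hg1 hτ le_rfl)
    (lintegral_timeChangeShift_mul_invSpeedAtZero_le hf hf_pos hφ hshift
      (measurable_one.indicator hB) hg1 le_rfl hτ)

end Stationarity

end TimeChangedPath

theorem stmt2_general (d : ℕ) (f : EuclideanSpace ℝ (Fin d) → ℝ) (hf : Continuous f)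
    (hf_pos : ∀ x, 0 < f x)
    (φ : PathSpace d → ℝ≥0 → ℝ≥0)
    (hφ : ∀ ω (t : ℝ≥0), psi d f ω (φ ω t) = (t : ℝ))
    (Φ : PathSpace d → PathSpace d)
    (hΦ : ∀ ω (t : ℝ≥0), Φ ω t = ω (φ ω t))
    (μ : Measure (PathSpace d)) [IsProbabilityMeasure μ]
    (hshift : ∀ τ : ℝ≥0, MeasurePreserving (pathShift d τ) μ μ)
    (h_int : Integrable (fun ω : PathSpace d => 1 / f (ω (0 : ℝ≥0))) μ)
    (q₀ : ℝ) (hq₀ : q₀ = ∫ ω, 1 / f (ω (0 : ℝ≥0)) ∂μ)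
    (P' : Measure (PathSpace d))
    (hP' : P' = Measure.map Φ
      (μ.withDensity fun ω => ENNReal.ofReal (q₀⁻¹ * (1 / f (ω (0 : ℝ≥0)))))) :
    Measurable Φ ∧ IsProbabilityMeasure P' ∧
      ∀ τ : ℝ≥0, MeasurePreserving (pathShift d τ) P' P' := by
  have hΦ_meas : Measurable Φ := (continuous_of_apply_eq_comp_phi hf hf_pos hφ hΦ).measurable
  have hw_nonneg : 0 ≤ fun ω : PathSpace d => 1 / f (ω 0) :=
    fun ω => (one_div_pos.2 (hf_pos _)).le
  have hq₀_pos : 0 < q₀ := by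
    rw [hq₀, integral_pos_iff_support_of_nonneg hw_nonneg h_int]
    simp [Function.support, (hf_pos _).ne']
  refine ⟨hΦ_meas, ?_, fun τ => ?_⟩
  · rw [hP', hq₀]
    have := isProbabilityMeasure_withDensity_ofReal_inv_integral_mul h_int hw_nonneg
      (hq₀ ▸ hq₀_pos)
    exact Measure.isProbabilityMeasure_map hΦ_meas.aemeasurable
  · have hdensity : (μ.withDensity fun ω => ENNReal.ofReal (q₀⁻¹ * (1 / f (ω 0)))) =
        ENNReal.ofReal q₀⁻¹ • μ.withDensity (invSpeedAtZero f) := by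
      rw [← withDensity_smul _ (measurable_invSpeedAtZero hf hf_pos)]
      exact congrArg _ (funext fun ω => ENNReal.ofReal_mul (inv_nonneg.2 hq₀_pos.le))
    rw [hP', hdensity]
    exact (hΦ_meas.measurePreserving _).of_semiconj
      ((measurePreserving_timeChangeShift_withDensity hf hf_pos hφ hshift
        τ.coe_nonneg).smul_measure _)
      (semiconj_timeChangeShift hf hf_pos hφ hΦ τ) (continuous_pathShift τ).measurable

/-- If every shift `θ_τ` preserves the probability measure `μ` on path space
and `q₀ = ∫ 1/f(ω(0)) dμ(ω) < ∞`, then the time-change map `Φ(ω) = ω ∘ φ_ω` (where `φ_ω`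
is the inverse of `ψ_ω`) is Borel measurable, and the pushforward `P'` under `Φ` of the
measure with density `ω ↦ q₀⁻¹/f(ω(0))` w.r.t. `μ` is a probability measure invariant
under every shift `θ_τ` (the time-changed process is stationary under `P'`). -/
theorem stmt2 (d : ℕ) (f : EuclideanSpace ℝ (Fin d) → ℝ) (hf : Continuous f)
    (M : ℝ) (hM : 0 < M) (hf_pos : ∀ x, 0 < f x) (hf_le : ∀ x, f x ≤ M)
    (φ : PathSpace d → ℝ≥0 → ℝ≥0)
    (hφ : ∀ ω (t : ℝ≥0), psi d f ω (φ ω t) = (t : ℝ))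
    (Φ : PathSpace d → PathSpace d)
    (hΦ : ∀ ω (t : ℝ≥0), Φ ω t = ω (φ ω t))
    (μ : Measure (PathSpace d)) [IsProbabilityMeasure μ]
    (hshift : ∀ τ : ℝ≥0, MeasurePreserving (pathShift d τ) μ μ)
    (h_int : Integrable (fun ω : PathSpace d => 1 / f (ω (0 : ℝ≥0))) μ)
    (q₀ : ℝ) (hq₀ : q₀ = ∫ ω, 1 / f (ω (0 : ℝ≥0)) ∂μ)
    (P' : Measure (PathSpace d))
    (hP' : P' = Measure.map Φ
      (μ.withDensity fun ω => ENNReal.ofReal (q₀⁻¹ * (1 / f (ω (0 : ℝ≥0)))))) :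
    Measurable Φ ∧ IsProbabilityMeasure P' ∧
      ∀ τ : ℝ≥0, MeasurePreserving (pathShift d τ) P' P' :=
  stmt2_general d f hf hf_pos φ hφ Φ hΦ μ hshift h_int q₀ hq₀ P' hP'
end
end

section
/- Let β₀,β₁,β₂,β₁₁,β₁₂,β₂₂ ∈ ℝ with the matrix Q = [[1+β₁₁, β₁₂], [β₁₂, 1+β₂₂]] positive definite, f(y,ẏ) = exp(β₀ + β₁y + β₂ẏ + (β₁₁/2)y² + β₁₂yẏ + (β₂₂/2)ẏ²), and q₀ = (2π)⁻¹ ∬_{ℝ²} exp(−(u²+v²)/2)/f(u,v) du dv. Set σ² = 1/(1+β₁₁ − β₁₂²/(1+β₂₂)) and m = σ²(−β₁ + β₂β₁₂/(1+β₂₂)). Then for every z ∈ ℝ, (2πq₀)⁻¹ ∫_ℝ exp(−(z²+v²)/2)/f(z,v) dv = (2πσ²)^{−1/2} exp(−(z−m)²/(2σ²)); that is, the stationary marginal density of the time-changed process in the quadratic exponential model is the Gaussian density with mean m and variance σ². -/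
/-!
Dividing by `f` turns the standard Gaussian weight into `exp (-β₀)` times the Gaussian kernel
`exp (-(x ⬝ Q x) / 2 - ⟪(β₁, β₂), x⟫)`. Completing the square in `v` integrates the kernel over `v`
to a Gaussian kernel in `z` whose precision is the Schur complement `1 + β₁₁ - β₁₂² / (1 + β₂₂)` of
`Q`; integrating once more computes `2π q₀`, and the quotient is the normalised Gaussian density.
-/

open MeasureTheory Real

section Gaussian

variable {k : ℝ}

lemma exp_neg_quadratic_eq (hk : k ≠ 0) (l v : ℝ) :
    exp (-(k * v ^ 2) / 2 - l * v) = exp (l ^ 2 / (2 * k)) * exp (-(k / 2) * (v + l / k) ^ 2) := by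
  rw [← exp_add]
  congr 1
  field_simp
  ring

lemma integrable_exp_neg_quadratic (hk : 0 < k) (l : ℝ) :
    Integrable fun v : ℝ ↦ exp (-(k * v ^ 2) / 2 - l * v) := by
  simp only [exp_neg_quadratic_eq hk.ne']
  exact ((integrable_exp_neg_mul_sq (half_pos hk)).comp_add_right (l / k)).const_mul _

lemma integral_exp_neg_quadratic (hk : 0 < k) (l : ℝ) :
    ∫ v : ℝ, exp (-(k * v ^ 2) / 2 - l * v) = √(2 * π / k) * exp (l ^ 2 / (2 * k)) := by
  simp only [exp_neg_quadratic_eq hk.ne']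
  rw [integral_const_mul, integral_add_right_eq_self (fun v ↦ exp (-(k / 2) * v ^ 2)),
    integral_gaussian, div_div_eq_mul_div, mul_comm π 2, mul_comm]

end Gaussian

lemma Matrix.PosDef.fin_two_pos {a b d : ℝ} (h : (!![a, b; b, d] : Matrix (Fin 2) (Fin 2) ℝ).PosDef) :
    0 < d := by
  simpa [Matrix.mulVec, dotProduct, Fin.sum_univ_two] using
    h.dotProduct_mulVec_pos (x := ![0, 1]) (by simpa using congrFun · 1)

lemma Matrix.PosDef.fin_two_schur_pos {a b d : ℝ}
    (h : (!![a, b; b, d] : Matrix (Fin 2) (Fin 2) ℝ).PosDef) : 0 < a - b ^ 2 / d := by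
  have hd := h.fin_two_pos
  have hdet := h.det_pos
  rw [Matrix.det_fin_two_of] at hdet
  rw [sub_pos, div_lt_iff₀ hd]
  linarith

noncomputable def gaussianKernel (a b c p q z v : ℝ) : ℝ :=
  exp (-(a * z ^ 2 + 2 * b * z * v + c * v ^ 2) / 2 - p * z - q * v)

section GaussianKernel

variable {a b c : ℝ} (p q : ℝ)

lemma gaussianKernel_nonneg (z v : ℝ) : 0 ≤ gaussianKernel a b c p q z v := (exp_pos _).le

lemma gaussianKernel_eq (z v : ℝ) :
    gaussianKernel a b c p q z v =
      exp (-(a * z ^ 2) / 2 - p * z) * exp (-(c * v ^ 2) / 2 - (q + b * z) * v) := by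
  rw [gaussianKernel, ← exp_add]
  ring_nf

lemma integral_gaussianKernel_snd (hc : 0 < c) (z : ℝ) :
    ∫ v, gaussianKernel a b c p q z v =
      √(2 * π / c) * exp (q ^ 2 / (2 * c)) *
        exp (-((a - b ^ 2 / c) * z ^ 2) / 2 - (p - q * b / c) * z) := by
  simp only [gaussianKernel_eq p q, integral_const_mul, integral_exp_neg_quadratic hc]
  rw [mul_left_comm, mul_assoc, ← exp_add, ← exp_add]
  congr 2
  field_simp
  ring

lemma integrable_gaussianKernel (hc : 0 < c) (hs : 0 < a - b ^ 2 / c) :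
    Integrable (fun x : ℝ × ℝ ↦ gaussianKernel a b c p q x.1 x.2) := by
  have hcont : Continuous (fun x : ℝ × ℝ ↦ gaussianKernel a b c p q x.1 x.2) := by
    unfold gaussianKernel
    fun_prop
  rw [Measure.volume_eq_prod, integrable_prod_iff hcont.aestronglyMeasurable]
  refine ⟨ae_of_all _ fun z ↦ ?_, ?_⟩
  · simp only [gaussianKernel_eq p q]
    exact (integrable_exp_neg_quadratic hc _).const_mul _
  · simp only [norm_of_nonneg (gaussianKernel_nonneg _ _ _ _), integral_gaussianKernel_snd p q hc]
    exact (integrable_exp_neg_quadratic hs _).const_mul _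

lemma integral_gaussianKernel (hc : 0 < c) (hs : 0 < a - b ^ 2 / c) :
    ∫ x : ℝ × ℝ, gaussianKernel a b c p q x.1 x.2 =
      √(2 * π / c) * exp (q ^ 2 / (2 * c)) *
        (√(2 * π / (a - b ^ 2 / c)) * exp ((p - q * b / c) ^ 2 / (2 * (a - b ^ 2 / c)))) := by
  have hint := integrable_gaussianKernel p q hc hs
  rw [Measure.volume_eq_prod] at hint ⊢
  rw [integral_prod _ hint]
  simp only [integral_gaussianKernel_snd p q hc, integral_const_mul, integral_exp_neg_quadratic hs]

lemma integral_gaussianKernel_snd_div_integral (hc : 0 < c) (hs : 0 < a - b ^ 2 / c)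
    (σ2 m : ℝ) (hσ2 : σ2 = 1 / (a - b ^ 2 / c)) (hm : m = σ2 * (-p + q * b / c)) (z : ℝ) :
    (∫ v, gaussianKernel a b c p q z v) / ∫ x : ℝ × ℝ, gaussianKernel a b c p q x.1 x.2 =
      (√(2 * π * σ2))⁻¹ * exp (-(z - m) ^ 2 / (2 * σ2)) := by
  rw [integral_gaussianKernel_snd p q hc, integral_gaussianKernel p q hc hs]
  set s := a - b ^ 2 / c
  have h2πσ2 : 2 * π * σ2 = 2 * π / s := by rw [hσ2]; ring
  have hexp : -(s * z ^ 2) / 2 - (p - q * b / c) * z - (p - q * b / c) ^ 2 / (2 * s) =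
      -(z - m) ^ 2 / (2 * σ2) := by
    rw [hm, hσ2]
    field_simp
    ring
  have hC : 0 < √(2 * π / c) * exp (q ^ 2 / (2 * c)) := by positivity
  rw [mul_div_mul_left _ _ hC.ne', h2πσ2, ← hexp, exp_sub (-(s * z ^ 2) / 2 - _)]
  ring

end GaussianKernel

/-- In the quadratic exponential model (with positive definite `Q`),
the stationary marginal density of the time-changed process,
`z ↦ (2πq₀)⁻¹ ∫ exp(−(z²+v²)/2)/f(z,v) dv`, is the Gaussian density with
variance `σ² = 1/(1+β₁₁ − β₁₂²/(1+β₂₂))` and mean `m = σ²(−β₁ + β₂β₁₂/(1+β₂₂))`. -/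
theorem stmt7 (β₀ β₁ β₂ β₁₁ β₁₂ β₂₂ : ℝ)
    (f : ℝ → ℝ → ℝ)
    (hf : ∀ y ydot : ℝ, f y ydot =
      Real.exp (β₀ + β₁ * y + β₂ * ydot + β₁₁ / 2 * y ^ 2 + β₁₂ * y * ydot + β₂₂ / 2 * ydot ^ 2))
    (hQ : (!![1 + β₁₁, β₁₂; β₁₂, 1 + β₂₂] : Matrix (Fin 2) (Fin 2) ℝ).PosDef)
    (q₀ : ℝ)
    (hq₀ : q₀ = (2 * π)⁻¹ * ∫ p : ℝ × ℝ, Real.exp (-(p.1 ^ 2 + p.2 ^ 2) / 2) / f p.1 p.2)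
    (σ2 m : ℝ)
    (hσ2 : σ2 = 1 / (1 + β₁₁ - β₁₂ ^ 2 / (1 + β₂₂)))
    (hm : m = σ2 * (-β₁ + β₂ * β₁₂ / (1 + β₂₂))) :
    ∀ z : ℝ, (2 * π * q₀)⁻¹ * ∫ v : ℝ, Real.exp (-(z ^ 2 + v ^ 2) / 2) / f z v
      = (Real.sqrt (2 * π * σ2))⁻¹ * Real.exp (-(z - m) ^ 2 / (2 * σ2)) := by
  intro z
  have hweight : ∀ y v, exp (-(y ^ 2 + v ^ 2) / 2) / f y v =
      exp (-β₀) * gaussianKernel (1 + β₁₁) β₁₂ (1 + β₂₂) β₁ β₂ y v := by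
    intro y v
    rw [hf, gaussianKernel, ← exp_sub, ← exp_add]
    ring_nf
  rw [← integral_gaussianKernel_snd_div_integral β₁ β₂ hQ.fin_two_pos hQ.fin_two_schur_pos σ2 m
    hσ2 hm z, hq₀]
  simp only [hweight, integral_const_mul]
  field_simp
end

section
/- Let β₀,β₁,β₂,β₁₁,β₁₂,β₂₂ ∈ ℝ and f(y,ẏ) = exp(β₀ + β₁y + β₂ẏ + (β₁₁/2)y² + β₁₂yẏ + (β₂₂/2)ẏ²). Then (2π)⁻¹ ∬_{ℝ²} v · log|v·f(u,v)| · exp(−(u²+v²)/2) du dv = β₂. Equivalently, for independent standard normal variables U₁, U₂, E[U₂ log|U₂ f(U₁,U₂)|] = β₂, which is the moment identity q₀·E'[Ż_t log|Ż_t|] = β₂ in the quadratic exponential model. -/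
/-!
Since `f > 0`, `v * log |v * f u v| = v * log |v| + v * Q u v` with `Q` the quadratic exponent.
The reflection `v ↦ -v` preserves Lebesgue measure and the Gaussian weight, and adding the
integrand to its reflection cancels `v * log |v|` and every monomial of `v * Q` that is odd in `v`,
leaving `2 (β₂ + β₁₂ u) v² exp (-(u² + v²) / 2)`. By Fubini this integrates to
`2 (β₂ √(2π)) √(2π) = 4π β₂`; the one-dimensional Gaussian moments are the total mass, mean and
variance of the standard normal law.
-/

open MeasureTheory Real ProbabilityTheory

lemma integrable_pow_mul_exp_neg_sq_div_two (n : ℕ) :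
    Integrable fun x : ℝ => x ^ n * exp (-x ^ 2 / 2) := by
  have := integrable_rpow_mul_exp_neg_mul_sq (b := 1 / 2) (by norm_num) (s := n)
    (by linarith [n.cast_nonneg (α := ℝ)])
  simpa [Real.rpow_natCast, neg_div, div_eq_inv_mul] using this

lemma integral_mul_exp_neg_sq_div_two_eq_integral_gaussianReal (F : ℝ → ℝ) :
    ∫ x, F x * exp (-x ^ 2 / 2) = √(2 * π) * ∫ x, F x ∂gaussianReal 0 1 := by
  rw [integral_gaussianReal_eq_integral_smul one_ne_zero, ← integral_const_mul]
  congr 1 with x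
  simp only [gaussianPDFReal, NNReal.coe_one, mul_one, sub_zero, smul_eq_mul]
  field_simp

lemma integral_exp_neg_sq_div_two : ∫ x : ℝ, exp (-x ^ 2 / 2) = √(2 * π) := by
  simpa using integral_mul_exp_neg_sq_div_two_eq_integral_gaussianReal 1

lemma integral_mul_exp_neg_sq_div_two : ∫ x : ℝ, x * exp (-x ^ 2 / 2) = 0 := by
  simpa using integral_mul_exp_neg_sq_div_two_eq_integral_gaussianReal id

lemma integral_sq_mul_exp_neg_sq_div_two : ∫ x : ℝ, x ^ 2 * exp (-x ^ 2 / 2) = √(2 * π) := by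
  have h := variance_id_gaussianReal (μ := 0) (v := 1)
  rw [variance_eq_integral measurable_id.aemeasurable] at h
  simp only [id_eq, integral_id_gaussianReal, sub_zero, NNReal.coe_one] at h
  rw [integral_mul_exp_neg_sq_div_two_eq_integral_gaussianReal, h, mul_one]

lemma abs_log_le_add_inv {y : ℝ} (hy : 0 < y) : |log y| ≤ y + y⁻¹ := by
  have h₁ := log_le_sub_one_of_pos hy
  have h₂ := log_le_sub_one_of_pos (inv_pos.2 hy)
  rw [log_inv] at h₂
  exact abs_le.2 ⟨by linarith [inv_pos.2 hy], by linarith [inv_pos.2 hy]⟩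

lemma abs_mul_log_abs_le (x : ℝ) : |x * log (|x|)| ≤ x ^ 2 + 1 := by
  rcases eq_or_ne x 0 with rfl | hx
  · simp
  have hx' : 0 < |x| := abs_pos.2 hx
  calc |x * log (|x|)| = |x| * |log (|x|)| := abs_mul _ _
    _ ≤ |x| * (|x| + |x|⁻¹) := mul_le_mul_of_nonneg_left (abs_log_le_add_inv hx') hx'.le
    _ = x ^ 2 + 1 := by rw [mul_add, mul_inv_cancel₀ hx'.ne', ← sq, sq_abs]

lemma integrable_mul_log_abs_mul_exp_neg_sq_div_two :
    Integrable fun x : ℝ => x * log |x| * exp (-x ^ 2 / 2) := by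
  refine ((integrable_pow_mul_exp_neg_sq_div_two 2).add
    (integrable_pow_mul_exp_neg_sq_div_two 0)).mono' (by fun_prop) (ae_of_all _ fun x => ?_)
  rw [Pi.add_apply, pow_zero, one_mul, ← add_one_mul, norm_mul, norm_of_nonneg (exp_pos _).le]
  exact mul_le_mul_of_nonneg_right (abs_mul_log_abs_le x) (exp_pos _).le

lemma exp_neg_add_sq_div_two (u v : ℝ) :
    exp (-(u ^ 2 + v ^ 2) / 2) = exp (-u ^ 2 / 2) * exp (-v ^ 2 / 2) := by
  rw [← exp_add]; ring_nf

lemma integrable_mul_prod_exp_neg_sq_div_two {f g : ℝ → ℝ}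
    (hf : Integrable fun u => f u * exp (-u ^ 2 / 2))
    (hg : Integrable fun v => g v * exp (-v ^ 2 / 2)) :
    Integrable fun p : ℝ × ℝ => f p.1 * g p.2 * exp (-(p.1 ^ 2 + p.2 ^ 2) / 2) := by
  rw [Measure.volume_eq_prod]
  refine (hf.mul_prod hg).congr (ae_of_all _ fun p => ?_)
  simp only [exp_neg_add_sq_div_two]
  ring

lemma mul_log_abs_mul_exp (v e : ℝ) : v * log |v * exp e| = v * log |v| + v * e := by
  rcases eq_or_ne v 0 with rfl | hv
  · simp
  rw [abs_mul, abs_of_pos (exp_pos e), log_mul (abs_ne_zero.2 hv) (exp_ne_zero e), log_exp,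
    mul_add]

lemma integral_add_comp_neg_snd {F : ℝ × ℝ → ℝ} (hF : Integrable F) :
    ∫ p, (F p + F (p.1, -p.2)) = 2 * ∫ p, F p := by
  have hσ : MeasurePreserving (MeasurableEquiv.prodCongr (.refl ℝ) (.neg ℝ)) := by
    rw [Measure.volume_eq_prod]
    exact (MeasurePreserving.id volume).prod (Measure.measurePreserving_neg volume)
  refine (integral_add hF (hσ.integrable_comp_of_integrable hF)).trans ?_
  rw [Function.comp_def, hσ.integral_comp' F, two_mul]

lemma integrable_monomial_mul_exp_neg_sq_div_two (m n : ℕ) :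
    Integrable fun p : ℝ × ℝ => p.1 ^ m * p.2 ^ n * exp (-(p.1 ^ 2 + p.2 ^ 2) / 2) :=
  integrable_mul_prod_exp_neg_sq_div_two (integrable_pow_mul_exp_neg_sq_div_two m)
    (integrable_pow_mul_exp_neg_sq_div_two n)

lemma integrable_snd_mul_quadratic_mul_exp_neg_sq_div_two (β₀ β₁ β₂ β₁₁ β₁₂ β₂₂ : ℝ) :
    Integrable fun p : ℝ × ℝ => p.2 * (β₀ + β₁ * p.1 + β₂ * p.2 + β₁₁ / 2 * p.1 ^ 2 +
      β₁₂ * p.1 * p.2 + β₂₂ / 2 * p.2 ^ 2) * exp (-(p.1 ^ 2 + p.2 ^ 2) / 2) := by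
  have hM := integrable_monomial_mul_exp_neg_sq_div_two
  refine ((((((hM 0 1).const_mul β₀).add ((hM 1 1).const_mul β₁)).add
    ((hM 0 2).const_mul β₂)).add ((hM 2 1).const_mul (β₁₁ / 2))).add
    ((hM 1 2).const_mul β₁₂)).add ((hM 0 3).const_mul (β₂₂ / 2)) |>.congr
    (ae_of_all _ fun p => ?_)
  simp only [Pi.add_apply]
  ring

lemma integrable_snd_mul_log_abs_mul_exp_mul_exp_neg_sq_div_two {E : ℝ × ℝ → ℝ}
    (hE : Integrable fun p : ℝ × ℝ => p.2 * E p * exp (-(p.1 ^ 2 + p.2 ^ 2) / 2)) :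
    Integrable fun p : ℝ × ℝ => p.2 * log |p.2 * exp (E p)| * exp (-(p.1 ^ 2 + p.2 ^ 2) / 2) := by
  have hlog := integrable_mul_prod_exp_neg_sq_div_two (integrable_pow_mul_exp_neg_sq_div_two 0)
    integrable_mul_log_abs_mul_exp_neg_sq_div_two
  refine (hlog.add hE).congr (ae_of_all _ fun p => ?_)
  simp only [Pi.add_apply, mul_log_abs_mul_exp]
  ring

lemma integral_affine_mul_exp_neg_sq_div_two (a b : ℝ) :
    ∫ u : ℝ, (a + b * u) * exp (-u ^ 2 / 2) = a * √(2 * π) := by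
  have h₀ := (integrable_pow_mul_exp_neg_sq_div_two 0).const_mul a
  have h₁ := (integrable_pow_mul_exp_neg_sq_div_two 1).const_mul b
  simp only [pow_zero, one_mul, pow_one] at h₀ h₁
  simp only [add_mul, mul_assoc, integral_add h₀ h₁, integral_const_mul,
    integral_exp_neg_sq_div_two, integral_mul_exp_neg_sq_div_two, mul_zero, add_zero]

/-- In the quadratic exponential model,
`(2π)⁻¹ ∬ v·log|v·f(u,v)|·exp(−(u²+v²)/2) du dv = β₂`, i.e. for independent standard
normals `U₁, U₂`, `E[U₂ log|U₂ f(U₁,U₂)|] = β₂` (the moment identity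
`q₀·E'[Ż_t log|Ż_t|] = β₂`). -/
theorem stmt8 (β₀ β₁ β₂ β₁₁ β₁₂ β₂₂ : ℝ)
    (f : ℝ → ℝ → ℝ)
    (hf : ∀ y ydot : ℝ, f y ydot =
      Real.exp (β₀ + β₁ * y + β₂ * ydot + β₁₁ / 2 * y ^ 2 + β₁₂ * y * ydot + β₂₂ / 2 * ydot ^ 2)) :
    (2 * π)⁻¹ * ∫ p : ℝ × ℝ,
        p.2 * Real.log |p.2 * f p.1 p.2| * Real.exp (-(p.1 ^ 2 + p.2 ^ 2) / 2) = β₂ := by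
  have hint := integrable_snd_mul_log_abs_mul_exp_mul_exp_neg_sq_div_two
    (integrable_snd_mul_quadratic_mul_exp_neg_sq_div_two β₀ β₁ β₂ β₁₁ β₁₂ β₂₂)
  simp only [← hf] at hint
  have hsymm : ∫ p : ℝ × ℝ, p.2 * log |p.2 * f p.1 p.2| * exp (-(p.1 ^ 2 + p.2 ^ 2) / 2) =
      ∫ p : ℝ × ℝ, (β₂ + β₁₂ * p.1) * exp (-p.1 ^ 2 / 2) * (p.2 ^ 2 * exp (-p.2 ^ 2 / 2)) := by
    rw [← mul_right_inj' (two_ne_zero (α := ℝ)), ← integral_add_comp_neg_snd hint,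
      ← integral_const_mul]
    congr with p
    simp only [hf, mul_log_abs_mul_exp, abs_neg, neg_sq, exp_neg_add_sq_div_two]
    ring
  rw [hsymm, Measure.volume_eq_prod,
    integral_prod_mul (fun u => (β₂ + β₁₂ * u) * exp (-u ^ 2 / 2))
      (fun v => v ^ 2 * exp (-v ^ 2 / 2)), integral_affine_mul_exp_neg_sq_div_two,
    integral_sq_mul_exp_neg_sq_div_two, mul_assoc, mul_self_sqrt (by positivity)]
  field_simp
end

section
/- Let f₁, f₂ : ℝ → (0,∞) be continuously differentiable, assume F(v) := v·f₂(v) is a strictly increasing bijection of ℝ onto ℝ with F'(v) > 0 for all v, and let k = F⁻¹ denote its (differentiable) inverse. Assume q₀ := (2π)⁻¹ ∬_{ℝ²} exp(−(u²+v²)/2)/(f₁(u)f₂(v)) du dv < ∞. Then for every bounded Borel function g : ℝ² → ℝ, (2πq₀)⁻¹ ∬_{ℝ²} g(u, F(v)·f₁(u)) / (f₁(u)f₂(v)) · exp(−(u²+v²)/2) du dv = ∬_{ℝ²} g(z,ż) · p(z,ż) dz dż, where p(z,ż) = (2πq₀)⁻¹ · k'(ż/f₁(z)) / (f₁(z)²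 · f₂(k(ż/f₁(z)))) · exp(−(z² + k(ż/f₁(z))²)/2). In particular, in the model with no interaction f(y,ẏ) = f₁(y)f₂(ẏ), the stationary joint density of (Z_t, Ż_t) is p. -/
/-!
The substitution `(u, v) ↦ (u, F v * f₁ u)` is a differentiable bijection of `ℝ²` with
Jacobian `F'(v) f₁(u) > 0`, so the change of variables formula (valid with no integrability
assumption: both sides are `0` together) turns `∫ g · p` into an integral over `(u, v)`. There
`k (F v) = v` and `k'(F v) = 1 / F'(v)`, and the Jacobian cancels the factor `k'` and one
power of `f₁` in `p`, leaving the left-hand side.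
-/

open MeasureTheory Real

theorem hasDerivAt_inverse_of_deriv_pos {F k : ℝ → ℝ} (hF' : ∀ v, 0 < deriv F v)
    (hk₁ : Function.LeftInverse k F) (hk₂ : Function.RightInverse k F) (v : ℝ) :
    HasDerivAt k (deriv F v)⁻¹ (F v) := by
  have hk : Continuous k :=
    ((strictMono_of_deriv_pos hF').orderIsoOfRightInverse F k hk₂).symm.continuous
  have hFv : HasDerivAt F (deriv F v) (k (F v)) := by
    rw [hk₁ v]
    exact (differentiableAt_of_deriv_ne_zero (hF' v).ne').hasDerivAt
  exact hFv.of_local_left_inverse hk.continuousAt (hF' v).ne' (.of_forall hk₂)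

def fiberMap (G h : ℝ → ℝ) (w : ℝ × ℝ) : ℝ × ℝ := (w.1, G w.2 * h w.1)

namespace fiberMap

variable {G h : ℝ → ℝ}

theorem injective (hG : G.Injective) (hh : ∀ u, h u ≠ 0) : (fiberMap G h).Injective := by
  rintro ⟨u, v⟩ ⟨u', v'⟩ huv
  simp only [fiberMap, Prod.mk.injEq] at huv
  obtain ⟨rfl, hv⟩ := huv
  rw [hG (mul_right_cancel₀ (hh u) hv)]

theorem surjective (hG : G.Surjective) (hh : ∀ u, h u ≠ 0) :
    (fiberMap G h).Surjective := by
  rintro ⟨z, ż⟩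
  obtain ⟨v, hv⟩ := hG (ż / h z)
  exact ⟨(z, v), by simp [fiberMap, hv, div_mul_cancel₀ _ (hh z)]⟩

theorem hasFDerivAt (hG : Differentiable ℝ G) (hh : Differentiable ℝ h) (w : ℝ × ℝ) :
    HasFDerivAt (fiberMap G h)
      ((ContinuousLinearMap.fst ℝ ℝ ℝ).prod
        (G w.2 • deriv h w.1 • ContinuousLinearMap.fst ℝ ℝ ℝ
          + h w.1 • deriv G w.2 • ContinuousLinearMap.snd ℝ ℝ ℝ)) w := by
  have hGw : HasFDerivAt (fun w : ℝ × ℝ => G w.2)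
      (deriv G w.2 • ContinuousLinearMap.snd ℝ ℝ ℝ) w :=
    (hG w.2).hasDerivAt.comp_hasFDerivAt w hasFDerivAt_snd
  have hhw : HasFDerivAt (fun w : ℝ × ℝ => h w.1)
      (deriv h w.1 • ContinuousLinearMap.fst ℝ ℝ ℝ) w :=
    (hh w.1).hasDerivAt.comp_hasFDerivAt w hasFDerivAt_fst
  exact hasFDerivAt_fst.prodMk (hGw.mul hhw)

theorem det_fderiv (hG : Differentiable ℝ G) (hh : Differentiable ℝ h) (w : ℝ × ℝ) :
    (fderiv ℝ (fiberMap G h) w).det = deriv G w.2 * h w.1 := by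
  rw [(hasFDerivAt hG hh w).fderiv, ContinuousLinearMap.det,
    ← LinearMap.det_toMatrix (Module.Basis.finTwoProd ℝ), Matrix.det_fin_two]
  simp [LinearMap.toMatrix_apply, Module.Basis.finTwoProd, mul_comm]

theorem integral_comp {E : Type*} [NormedAddCommGroup E] [NormedSpace ℝ E] (hG : Differentiable ℝ G) (hh : Differentiable ℝ h)
    (hG_inj : G.Injective) (hG_surj : G.Surjective) (hh₀ : ∀ u, h u ≠ 0)
    (φ : ℝ × ℝ → E) :
    ∫ w, φ w = ∫ w, |deriv G w.2 * h w.1| • φ (fiberMap G h w) := by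
  have := integral_image_eq_integral_abs_det_fderiv_smul volume MeasurableSet.univ
    (fun w _ => (hasFDerivAt hG hh w).differentiableAt.hasFDerivAt.hasFDerivWithinAt)
    (injective hG_inj hh₀).injOn φ
  simpa [Set.image_univ, (surjective hG_surj hh₀).range_eq, det_fderiv hG hh] using this

end fiberMap

theorem stmt14_general (f₁ f₂ : ℝ → ℝ)
    (hf₁_pos : ∀ v, 0 < f₁ v)
    (hf₁ : ContDiff ℝ 1 f₁)
    (F : ℝ → ℝ)
    (hF' : ∀ v, 0 < deriv F v)
    (k : ℝ → ℝ) (hk₁ : Function.LeftInverse k F) (hk₂ : Function.RightInverse k F)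
    (q₀ : ℝ)
    (p : ℝ → ℝ → ℝ)
    (hp : ∀ z zdot : ℝ, p z zdot =
      (2 * π * q₀)⁻¹ * deriv k (zdot / f₁ z) / ((f₁ z) ^ 2 * f₂ (k (zdot / f₁ z))) *
        Real.exp (-(z ^ 2 + (k (zdot / f₁ z)) ^ 2) / 2))
    (g : ℝ × ℝ → ℝ) :
    (2 * π * q₀)⁻¹ * ∫ w : ℝ × ℝ,
        g (w.1, F w.2 * f₁ w.1) / (f₁ w.1 * f₂ w.2) * Real.exp (-(w.1 ^ 2 + w.2 ^ 2) / 2)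
      = ∫ w : ℝ × ℝ, g w * p w.1 w.2 := by
  have hF_diff : Differentiable ℝ F := fun v => differentiableAt_of_deriv_ne_zero (hF' v).ne'
  have hdk : ∀ v, deriv k (F v) = (deriv F v)⁻¹ :=
    fun v => (hasDerivAt_inverse_of_deriv_pos hF' hk₁ hk₂ v).deriv
  rw [fiberMap.integral_comp hF_diff (hf₁.differentiable one_ne_zero) hk₁.injective
    hk₂.surjective (fun u => (hf₁_pos u).ne') (fun w => g w * p w.1 w.2), ← integral_const_mul]
  congr 1 with ⟨u, v⟩
  have hu := hf₁_pos u
  have hv := hF' v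
  simp only [smul_eq_mul, fiberMap, hp, mul_div_cancel_right₀ _ hu.ne', hk₁ v, hdk v,
    abs_of_pos (mul_pos hv hu)]
  field_simp

/-- In the model with no interaction `f(y,ẏ) = f₁(y)f₂(ẏ)` with
`F(v) = v f₂(v)` a strictly increasing bijection with inverse `k`, for every bounded
Borel `g`, the change of variables `z = u, ż = F(v)f₁(u)` identifies
`(2πq₀)⁻¹ ∬ g(u, F(v)f₁(u))/(f₁(u)f₂(v)) e^{−(u²+v²)/2} du dv` with `∬ g·p`, where `p`
is the stationary joint density of `(Z_t, Ż_t)`. -/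
theorem stmt14 (f₁ f₂ : ℝ → ℝ)
    (hf₁_pos : ∀ v, 0 < f₁ v) (hf₂_pos : ∀ v, 0 < f₂ v)
    (hf₁ : ContDiff ℝ 1 f₁) (hf₂ : ContDiff ℝ 1 f₂)
    (F : ℝ → ℝ) (hF : ∀ v, F v = v * f₂ v)
    (hF_mono : StrictMono F) (hF_bij : Function.Bijective F)
    (hF' : ∀ v, 0 < deriv F v)
    (k : ℝ → ℝ) (hk₁ : Function.LeftInverse k F) (hk₂ : Function.RightInverse k F)
    (h_int : Integrable
      (fun p : ℝ × ℝ => Real.exp (-(p.1 ^ 2 + p.2 ^ 2) / 2) / (f₁ p.1 * f₂ p.2)))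
    (q₀ : ℝ)
    (hq₀ : q₀ = (2 * π)⁻¹ *
      ∫ p : ℝ × ℝ, Real.exp (-(p.1 ^ 2 + p.2 ^ 2) / 2) / (f₁ p.1 * f₂ p.2))
    (p : ℝ → ℝ → ℝ)
    (hp : ∀ z zdot : ℝ, p z zdot =
      (2 * π * q₀)⁻¹ * deriv k (zdot / f₁ z) / ((f₁ z) ^ 2 * f₂ (k (zdot / f₁ z))) *
        Real.exp (-(z ^ 2 + (k (zdot / f₁ z)) ^ 2) / 2))
    (g : ℝ × ℝ → ℝ) (hg : Measurable g) (C : ℝ) (hgC : ∀ x, |g x| ≤ C) :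
    (2 * π * q₀)⁻¹ * ∫ w : ℝ × ℝ,
        g (w.1, F w.2 * f₁ w.1) / (f₁ w.1 * f₂ w.2) * Real.exp (-(w.1 ^ 2 + w.2 ^ 2) / 2)
      = ∫ w : ℝ × ℝ, g w * p w.1 w.2 :=
  stmt14_general f₁ f₂ hf₁_pos hf₁ F hF' k hk₁ hk₂ q₀ p hp g
end

section
/- Let f₁, f₂ : ℝ → (0,∞) be continuously differentiable, assume F(v) := v·f₂(v) is a strictly increasing bijection of ℝ with F'(v) > 0 for all v, let k = F⁻¹, assume the normalization ∫_ℝ exp(−u²/2)/f₂(u) du = 1, set q₀ := (2π)⁻¹ ∫_ℝ exp(−u²/2)/f₁(u) du (assumed finite), and define p(z,ż) = (2πq₀)⁻¹ · k'(ż/f₁(z)) / (f₁(z)² f₂(k(ż/f₁(z)))) · exp(−(z² + k(ż/f₁(z))²)/2). Then for every z ∈ ℝ, ∫_ℝ |ż| p(z,ż) dż = 2·f₁(z)·∫_ℝ p(z,ż) dż; that is, the conditional expectation of |Ż_t| given Z_t = z equals 2 f₁(z). -/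
open MeasureTheory Real

/-! Substituting `ż = f₁(z) u` writes `p(z, f₁(z) u)` as `c / f₁(z)² · k'(u) e^{-k(u)²/2} / f₂(k u)`
with `c` independent of `u`. The further substitution `u = F v` turns the integral of this
`u`-profile into `∫ e^{-v²/2} / f₂ v = 1`, and, because `|F v| = |v| f₂ v`, its `|u|`-weighted
integral into `∫ |v| e^{-v²/2} = 2`. The two rescalings `ż = f₁(z) u` differ by one factor `f₁(z)`. -/

theorem integral_abs_mul_exp_neg_sq_div_two : ∫ v : ℝ, |v| * exp (-v ^ 2 / 2) = 2 := by
  have hIoi : ∫ v in Set.Ioi (0 : ℝ), v * exp (-v ^ 2 / 2) = 1 := by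
    have hcomplex : ∀ v : ℝ,
        ((v * exp (-v ^ 2 / 2) : ℝ) : ℂ) = v * Complex.exp (-(1 / 2) * v ^ 2) := by
      intro v
      push_cast
      ring_nf
    apply Complex.ofReal_injective
    rw [← integral_complex_ofReal]
    simp only [hcomplex, integral_mul_cexp_neg_mul_sq (b := 1 / 2) (by norm_num)]
    norm_num
  have hfold := integral_comp_abs (f := fun v : ℝ => v * exp (-v ^ 2 / 2))
  simp only [sq_abs] at hfold
  rw [hfold, hIoi, mul_one]

section InverseFunction

variable {F k : ℝ → ℝ}

theorem hasDerivAt_of_rightInverse_of_deriv_pos (hF' : ∀ v, 0 < deriv F v)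
    (hk : Function.RightInverse k F) (u : ℝ) : HasDerivAt k (deriv F (k u))⁻¹ u := by
  have hk_cont : Continuous k :=
    ((strictMono_of_deriv_pos hF').orderIsoOfRightInverse F k hk).symm.continuous
  exact HasDerivAt.of_local_left_inverse hk_cont.continuousAt
    (differentiableAt_of_deriv_ne_zero (hF' (k u)).ne').hasDerivAt (hF' (k u)).ne'
    (Filter.Eventually.of_forall hk)

theorem integral_deriv_smul_comp_of_rightInverse {E : Type*} [NormedAddCommGroup E]
    [NormedSpace ℝ E] (hF' : ∀ v, 0 < deriv F v) (hk : Function.RightInverse k F) (φ : ℝ → E) :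
    ∫ u, deriv k u • φ (k u) = ∫ v, φ v := by
  have hk_surj : Function.Surjective k :=
    (hk.leftInverse_of_injective (strictMono_of_deriv_pos hF').injective).surjective
  have hk' : ∀ u, HasDerivAt k (deriv F (k u))⁻¹ u :=
    hasDerivAt_of_rightInverse_of_deriv_pos hF' hk
  have hsubst := integral_image_eq_integral_abs_deriv_smul MeasurableSet.univ
    (fun u _ => (hk' u).hasDerivWithinAt) hk.injective.injOn φ
  simp only [Set.image_univ, hk_surj.range_eq, Measure.restrict_univ] at hsubst
  rw [hsubst]
  refine integral_congr_ae (Filter.Eventually.of_forall fun u => ?_)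
  simp only [(hk' u).deriv, abs_of_pos (inv_pos.mpr (hF' (k u)))]

end InverseFunction

theorem integral_eq_mul_integral_comp_mul_left {a : ℝ} (ha : 0 < a) (q : ℝ → ℝ) :
    ∫ x, q x = a * ∫ u, q (a * u) := by
  rw [Measure.integral_comp_mul_left, smul_eq_mul, abs_inv, abs_of_pos ha,
    mul_inv_cancel_left₀ ha.ne']

theorem stmt16_general (f₁ f₂ : ℝ → ℝ)
    (hf₁_pos : ∀ v, 0 < f₁ v) (hf₂_pos : ∀ v, 0 < f₂ v)
    (F : ℝ → ℝ) (hF : ∀ v, F v = v * f₂ v)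
    (hF' : ∀ v, 0 < deriv F v)
    (k : ℝ → ℝ) (hk₂ : Function.RightInverse k F)
    (hf₂_norm : ∫ u : ℝ, Real.exp (-u ^ 2 / 2) / f₂ u = 1)
    (q₀ : ℝ)
    (p : ℝ → ℝ → ℝ)
    (hp : ∀ z zdot : ℝ, p z zdot =
      (2 * π * q₀)⁻¹ * deriv k (zdot / f₁ z) / ((f₁ z) ^ 2 * f₂ (k (zdot / f₁ z))) *
        Real.exp (-(z ^ 2 + (k (zdot / f₁ z)) ^ 2) / 2)) :
    ∀ z : ℝ, ∫ zdot : ℝ, |zdot| * p z zdot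
      = 2 * f₁ z * ∫ zdot : ℝ, p z zdot := by
  intro z
  set a := f₁ z
  have ha : 0 < a := hf₁_pos z
  set c := (2 * π * q₀)⁻¹ * exp (-z ^ 2 / 2)
  set g : ℝ → ℝ := fun u => deriv k u * (exp (-k u ^ 2 / 2) / f₂ (k u))
  have hp_scaled : ∀ u, p z (a * u) = c / a ^ 2 * g u := by
    intro u
    rw [hp, mul_div_cancel_left₀ u ha.ne',
      show -(z ^ 2 + k u ^ 2) / 2 = -z ^ 2 / 2 + -k u ^ 2 / 2 by ring, exp_add]
    ring
  have h_total : ∫ u, g u = 1 :=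
    (integral_deriv_smul_comp_of_rightInverse hF' hk₂ _).trans hf₂_norm
  have h_abs : ∫ u, |u| * g u = 2 := by
    calc ∫ u, |u| * g u = ∫ u, deriv k u * (|k u| * exp (-k u ^ 2 / 2)) := by
          refine integral_congr_ae (Filter.Eventually.of_forall fun u => ?_)
          have hu : |u| = |k u| * f₂ (k u) := by
            rw [← abs_of_pos (hf₂_pos (k u)), ← abs_mul, ← hF, hk₂]
          simp only [g, hu]
          field_simp [(hf₂_pos (k u)).ne']
      _ = 2 := (integral_deriv_smul_comp_of_rightInverse hF' hk₂ _).trans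
          integral_abs_mul_exp_neg_sq_div_two
  have h_abs_scaled : ∀ u, |a * u| * p z (a * u) = c / a * (|u| * g u) := by
    intro u
    rw [hp_scaled, abs_mul, abs_of_pos ha]
    field_simp
  rw [integral_eq_mul_integral_comp_mul_left ha, integral_eq_mul_integral_comp_mul_left ha (p z)]
  simp only [h_abs_scaled]
  simp only [hp_scaled, integral_const_mul, h_abs, h_total]
  field_simp

/-- In the model with no interaction, the conditional expectation of
`|Ż_t|` given `Z_t = z` equals `2 f₁(z)`:
`∫ |ż| p(z,ż) dż = 2 f₁(z) ∫ p(z,ż) dż` for every `z`. -/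
theorem stmt16 (f₁ f₂ : ℝ → ℝ)
    (hf₁_pos : ∀ v, 0 < f₁ v) (hf₂_pos : ∀ v, 0 < f₂ v)
    (hf₁ : ContDiff ℝ 1 f₁) (hf₂ : ContDiff ℝ 1 f₂)
    (F : ℝ → ℝ) (hF : ∀ v, F v = v * f₂ v)
    (hF_mono : StrictMono F) (hF_bij : Function.Bijective F)
    (hF' : ∀ v, 0 < deriv F v)
    (k : ℝ → ℝ) (hk₁ : Function.LeftInverse k F) (hk₂ : Function.RightInverse k F)
    (hf₂_norm : ∫ u : ℝ, Real.exp (-u ^ 2 / 2) / f₂ u = 1)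
    (h_int : Integrable (fun u : ℝ => Real.exp (-u ^ 2 / 2) / f₁ u))
    (q₀ : ℝ) (hq₀ : q₀ = (2 * π)⁻¹ * ∫ u : ℝ, Real.exp (-u ^ 2 / 2) / f₁ u)
    (p : ℝ → ℝ → ℝ)
    (hp : ∀ z zdot : ℝ, p z zdot =
      (2 * π * q₀)⁻¹ * deriv k (zdot / f₁ z) / ((f₁ z) ^ 2 * f₂ (k (zdot / f₁ z))) *
        Real.exp (-(z ^ 2 + (k (zdot / f₁ z)) ^ 2) / 2)) :
    ∀ z : ℝ, ∫ zdot : ℝ, |zdot| * p z zdot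
      = 2 * f₁ z * ∫ zdot : ℝ, p z zdot :=
  stmt16_general f₁ f₂ hf₁_pos hf₂_pos F hF hF' k hk₂ hf₂_norm q₀ p hp
end

section
/- Let f₁, f₂ : ℝ → (0,∞) be continuously differentiable, assume F(v) := v·f₂(v) is a strictly increasing bijection of ℝ with F'(v) > 0 for all v, let k = F⁻¹, assume the normalization ∫_ℝ exp(−u²/2)/f₂(u) du = 1, set q₀ := (2π)⁻¹ ∫_ℝ exp(−u²/2)/f₁(u) du (assumed finite), and define p(z,ż) = (2πq₀)⁻¹ · k'(ż/f₁(z)) / (f₁(z)² f₂(k(ż/f₁(z)))) · exp(−(z² + k(ż/f₁(z))²)/2). Define p_V(v) = (k'(v)·k(v)/v)·exp(−k(v)²/2) for v ≠ 0 and p_Z(z) = (2πq₀)⁻¹ exp(−z²/2)/f₁(z). Then (i) ∫_ℝ p_V(v) dv = 1, and (ii) for all z ∈ ℝ and ż ≠ 0, p(z,ż) = p_Z(z)·(1/f₁(z))·p_V(ż/f₁(z)); that is, V_t = Ż_t/f₁(Z_t) has density p_V and is independent of Z_t, so the conditional law of Ż_t given Z_t = z depends on z only through the scale factor f₁(z).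 -/
open MeasureTheory Real

/-!
Substituting `v = F u` in `∫ p_V`, the Jacobian `F'(u)` cancels `k'(F u) = 1 / F'(u)`, and
`k(F u) / F u = 1 / f₂(u)`, so `∫ p_V` is the normalization integral `∫ e^{-u²/2} / f₂(u) du`.
The factorization of `p` is the same identity `k(v) / v = 1 / f₂(k v)` together with
`e^{-(z² + k²)/2} = e^{-z²/2} e^{-k²/2}`.
-/

theorem integral_eq_integral_deriv_smul_comp_of_monotone {E : Type*} [NormedAddCommGroup E]
    [NormedSpace ℝ E] {F F' : ℝ → ℝ} (hF : Monotone F) (hF_surj : Function.Surjective F)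
    (hF' : ∀ x, HasDerivAt F (F' x) x) (g : ℝ → E) :
    ∫ y, g y = ∫ x, F' x • g (F x) := by
  simpa [hF_surj.range_eq] using
    integral_image_eq_integral_deriv_smul_of_monotoneOn MeasurableSet.univ
      (fun x _ => (hF' x).hasDerivWithinAt) (hF.monotoneOn _) g

theorem StrictMono.hasDerivAt_rightInverse {F k : ℝ → ℝ} {F' x : ℝ} (hF : StrictMono F)
    (hk : Function.RightInverse k F) (hFx : HasDerivAt F F' x) (hF' : F' ≠ 0) :
    HasDerivAt k F'⁻¹ (F x) := by
  set e := hF.orderIsoOfRightInverse F k hk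
  have hkF : k (F x) = x := e.symm_apply_apply x
  exact HasDerivAt.of_local_left_inverse e.symm.continuous.continuousAt (by rwa [hkF]) hF'
    (Filter.Eventually.of_forall hk)

theorem integral_deriv_mul_div_mul_comp_rightInverse {f₂ F k : ℝ → ℝ} (φ : ℝ → ℝ)
    (hF : ∀ v, F v = v * f₂ v) (hf₂ : ∀ v, f₂ v ≠ 0) (hF_mono : StrictMono F)
    (hF' : ∀ v, deriv F v ≠ 0) (hk : Function.RightInverse k F) :
    ∫ v, deriv k v * k v / v * φ (k v) = ∫ u, φ u / f₂ u := by
  have hFd (x : ℝ) : HasDerivAt F (deriv F x) x :=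
    (differentiableAt_of_deriv_ne_zero (hF' x)).hasDerivAt
  have hkd (x : ℝ) : deriv k (F x) = (deriv F x)⁻¹ :=
    (hF_mono.hasDerivAt_rightInverse hk (hFd x) (hF' x)).deriv
  have hkF (x : ℝ) : k (F x) = x := hF_mono.injective (hk (F x))
  rw [integral_eq_integral_deriv_smul_comp_of_monotone hF_mono.monotone hk.surjective hFd]
  refine integral_congr_ae ((Measure.ae_ne volume 0).mono fun x hx => ?_)
  have hFx := hF' x
  have hf₂x := hf₂ x
  simp only [smul_eq_mul, hkd, hkF]
  rw [hF x]
  field_simp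

theorem mul_div_mul_exp_eq_mul_mul_mul_exp {c a d z κ φ v : ℝ} (ha : a ≠ 0) (hv : v ≠ 0)
    (hκ : κ * φ = v) :
    c * d / (a ^ 2 * φ) * exp (-(z ^ 2 + κ ^ 2) / 2) =
      c * exp (-z ^ 2 / 2) / a * (1 / a) * (d * κ / v * exp (-κ ^ 2 / 2)) := by
  subst hκ
  have hφ : φ ≠ 0 := right_ne_zero_of_mul hv
  have hκ : κ ≠ 0 := left_ne_zero_of_mul hv
  rw [show -(z ^ 2 + κ ^ 2) / 2 = -z ^ 2 / 2 + -κ ^ 2 / 2 by ring, exp_add]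
  field_simp

theorem stmt17_general (f₁ f₂ : ℝ → ℝ)
    (hf₁_pos : ∀ v, 0 < f₁ v) (hf₂_pos : ∀ v, 0 < f₂ v)
    (F : ℝ → ℝ) (hF : ∀ v, F v = v * f₂ v)
    (hF_mono : StrictMono F)
    (hF' : ∀ v, 0 < deriv F v)
    (k : ℝ → ℝ) (hk₂ : Function.RightInverse k F)
    (hf₂_norm : ∫ u : ℝ, Real.exp (-u ^ 2 / 2) / f₂ u = 1)
    (q₀ : ℝ)
    (p : ℝ → ℝ → ℝ)
    (hp : ∀ z zdot : ℝ, p z zdot =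
      (2 * π * q₀)⁻¹ * deriv k (zdot / f₁ z) / ((f₁ z) ^ 2 * f₂ (k (zdot / f₁ z))) *
        Real.exp (-(z ^ 2 + (k (zdot / f₁ z)) ^ 2) / 2))
    (pV : ℝ → ℝ)
    (hpV : ∀ v : ℝ, v ≠ 0 →
      pV v = deriv k v * k v / v * Real.exp (-(k v) ^ 2 / 2))
    (pZ : ℝ → ℝ)
    (hpZ : ∀ z : ℝ, pZ z = (2 * π * q₀)⁻¹ * Real.exp (-z ^ 2 / 2) / f₁ z) :
    (∫ v : ℝ, pV v) = 1 ∧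
    ∀ z zdot : ℝ, zdot ≠ 0 →
      p z zdot = pZ z * (1 / f₁ z) * pV (zdot / f₁ z) := by
  refine ⟨?_, fun z zdot hzdot => ?_⟩
  · calc ∫ v, pV v = ∫ v, deriv k v * k v / v * exp (-(k v) ^ 2 / 2) :=
          integral_congr_ae ((Measure.ae_ne volume 0).mono hpV)
      _ = ∫ u, exp (-u ^ 2 / 2) / f₂ u :=
          integral_deriv_mul_div_mul_comp_rightInverse (fun u => exp (-u ^ 2 / 2)) hF
            (fun v => (hf₂_pos v).ne') hF_mono (fun v => (hF' v).ne') hk₂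
      _ = 1 := hf₂_norm
  · have hv : zdot / f₁ z ≠ 0 := div_ne_zero hzdot (hf₁_pos z).ne'
    rw [hp, hpZ, hpV _ hv]
    exact mul_div_mul_exp_eq_mul_mul_mul_exp (hf₁_pos z).ne' hv ((hF _).symm.trans (hk₂ _))

/-- In the model with no interaction, with
`p_V(v) = (k'(v)k(v)/v)e^{−k(v)²/2}` (for `v ≠ 0`) and
`p_Z(z) = (2πq₀)⁻¹ e^{−z²/2}/f₁(z)`:
(i) `∫ p_V = 1`, and (ii) `p(z,ż) = p_Z(z)·(1/f₁(z))·p_V(ż/f₁(z))` for `ż ≠ 0`,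
so `V_t = Ż_t/f₁(Z_t)` has density `p_V` and is independent of `Z_t`. -/
theorem stmt17 (f₁ f₂ : ℝ → ℝ)
    (hf₁_pos : ∀ v, 0 < f₁ v) (hf₂_pos : ∀ v, 0 < f₂ v)
    (hf₁ : ContDiff ℝ 1 f₁) (hf₂ : ContDiff ℝ 1 f₂)
    (F : ℝ → ℝ) (hF : ∀ v, F v = v * f₂ v)
    (hF_mono : StrictMono F) (hF_bij : Function.Bijective F)
    (hF' : ∀ v, 0 < deriv F v)
    (k : ℝ → ℝ) (hk₁ : Function.LeftInverse k F) (hk₂ : Function.RightInverse k F)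
    (hf₂_norm : ∫ u : ℝ, Real.exp (-u ^ 2 / 2) / f₂ u = 1)
    (h_int : Integrable (fun u : ℝ => Real.exp (-u ^ 2 / 2) / f₁ u))
    (q₀ : ℝ) (hq₀ : q₀ = (2 * π)⁻¹ * ∫ u : ℝ, Real.exp (-u ^ 2 / 2) / f₁ u)
    (p : ℝ → ℝ → ℝ)
    (hp : ∀ z zdot : ℝ, p z zdot =
      (2 * π * q₀)⁻¹ * deriv k (zdot / f₁ z) / ((f₁ z) ^ 2 * f₂ (k (zdot / f₁ z))) *
        Real.exp (-(z ^ 2 + (k (zdot / f₁ z)) ^ 2) / 2))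
    (pV : ℝ → ℝ)
    (hpV : ∀ v : ℝ, v ≠ 0 →
      pV v = deriv k v * k v / v * Real.exp (-(k v) ^ 2 / 2))
    (pZ : ℝ → ℝ)
    (hpZ : ∀ z : ℝ, pZ z = (2 * π * q₀)⁻¹ * Real.exp (-z ^ 2 / 2) / f₁ z) :
    (∫ v : ℝ, pV v) = 1 ∧
    ∀ z zdot : ℝ, zdot ≠ 0 →
      p z zdot = pZ z * (1 / f₁ z) * pV (zdot / f₁ z) :=
  stmt17_general f₁ f₂ hf₁_pos hf₂_pos F hF hF_mono hF' k hk₂ hf₂_norm q₀ p hp pV hpV pZ hpZ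
end

section
/- Let k : ℝ → ℝ be differentiable, strictly increasing, with k(0) = 0, and define p_V(v) = (k'(v)·k(v)/v)·exp(−k(v)²/2) for v ≠ 0. Then for every v ∈ ℝ, ∫₀ᵛ u·p_V(u) du = 1 − exp(−k(v)²/2), and consequently k(v) = sign(v)·√(−2·ln(1 − ∫₀ᵛ u·p_V(u) du)). -/
open MeasureTheory Real intervalIntegral

/-!
Since `u · p_V(u) = k'(u) k(u) e^{-k(u)²/2}` off `u = 0`, the integrand is the derivative of
`-e^{-k(u)²/2}`, and the fundamental theorem of calculus gives the first identity. Monotonicity of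
`k` makes this derivative of one sign on `[0, v]`, which is what makes it integrable even though
`k'` need not be continuous. Inverting `1 - e^{-k(v)²/2}` recovers `|k(v)|`, and `k(0) = 0` with
strict monotonicity gives the sign of `k(v)` as that of `v`.
-/

theorem intervalIntegral.intervalIntegrable_deriv_of_nonpos {g g' : ℝ → ℝ} {a b : ℝ}
    (hcont : ContinuousOn g (Set.uIcc a b))
    (hderiv : ∀ x ∈ Set.Ioo (min a b) (max a b), HasDerivAt g (g' x) x)
    (hneg : ∀ x ∈ Set.Ioo (min a b) (max a b), g' x ≤ 0) :
    IntervalIntegrable g' volume a b := by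
  simpa only [neg_neg] using (intervalIntegrable_deriv_of_nonneg (g' := -g') hcont.neg
    (fun x hx => (hderiv x hx).neg) fun x hx => neg_nonneg.2 (hneg x hx)).neg

theorem hasDerivAt_neg_exp_neg_sq_half {k : ℝ → ℝ} {k' x : ℝ} (hk : HasDerivAt k k' x) :
    HasDerivAt (fun u => -exp (-k u ^ 2 / 2)) (k' * k x * exp (-k x ^ 2 / 2)) x := by
  have hexponent : HasDerivAt (fun u => -k u ^ 2 / 2) (-(2 * k x ^ 1 * k') / 2) x :=
    (hk.pow 2).neg.div_const 2
  refine hexponent.exp.neg.congr_deriv ?_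
  ring

theorem integral_deriv_mul_mul_exp_neg_sq_half {k : ℝ → ℝ} (hk : Differentiable ℝ k)
    (hk_mono : Monotone k) (hk0 : k 0 = 0) (v : ℝ) :
    ∫ u in (0 : ℝ)..v, deriv k u * k u * exp (-k u ^ 2 / 2) = 1 - exp (-k v ^ 2 / 2) := by
  have hderiv : ∀ x, HasDerivAt (fun u => -exp (-k u ^ 2 / 2))
      (deriv k x * k x * exp (-k x ^ 2 / 2)) x :=
    fun x => hasDerivAt_neg_exp_neg_sq_half (hk x).hasDerivAt
  have hcont : ContinuousOn (fun u => -exp (-k u ^ 2 / 2)) (Set.uIcc 0 v) :=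
    fun x _ => (hderiv x).continuousAt.continuousWithinAt
  have hint : IntervalIntegrable (fun u => deriv k u * k u * exp (-k u ^ 2 / 2)) volume 0 v := by
    rcases le_total 0 v with hv | hv
    · refine intervalIntegrable_deriv_of_nonneg hcont (fun x _ => hderiv x) fun x hx => ?_
      have hkx : 0 ≤ k x := hk0 ▸ hk_mono (by simpa [hv] using hx.1.le)
      exact mul_nonneg (mul_nonneg hk_mono.deriv_nonneg hkx) (exp_nonneg _)
    · refine intervalIntegrable_deriv_of_nonpos hcont (fun x _ => hderiv x) fun x hx => ?_
      have hkx : k x ≤ 0 := hk0 ▸ hk_mono (by simpa [hv] using hx.2.le)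
      exact mul_nonpos_of_nonpos_of_nonneg
        (mul_nonpos_of_nonneg_of_nonpos hk_mono.deriv_nonneg hkx) (exp_nonneg _)
  rw [integral_eq_sub_of_hasDerivAt (fun x _ => hderiv x) hint, hk0]
  norm_num
  ring

theorem sqrt_neg_two_mul_log_exp_neg_sq_half (t : ℝ) :
    √(-2 * log (exp (-t ^ 2 / 2))) = |t| := by
  rw [log_exp, show -2 * (-t ^ 2 / 2) = t ^ 2 by ring, sqrt_sq_eq_abs]

theorem StrictMono.sign_mul_abs_of_map_zero {k : ℝ → ℝ} (hk : StrictMono k) (hk0 : k 0 = 0)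
    (v : ℝ) : Real.sign v * |k v| = k v := by
  rcases lt_trichotomy v 0 with hv | rfl | hv
  · rw [Real.sign_of_neg hv, abs_of_neg (hk0 ▸ hk hv : k v < 0)]
    ring
  · simp [hk0]
  · rw [Real.sign_of_pos hv, abs_of_pos (hk0 ▸ hk hv : 0 < k v)]
    ring

/-- If `k` is differentiable, strictly increasing, `k(0) = 0`, and
`p_V(v) = (k'(v)k(v)/v)e^{−k(v)²/2}` for `v ≠ 0`, then for every `v`,
`∫₀ᵛ u p_V(u) du = 1 − e^{−k(v)²/2}`, and consequently
`k(v) = sign(v)·√(−2 ln(1 − ∫₀ᵛ u p_V(u) du))`. -/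
theorem stmt18 (k : ℝ → ℝ) (hk : Differentiable ℝ k)
    (hk_mono : StrictMono k) (hk0 : k 0 = 0)
    (pV : ℝ → ℝ)
    (hpV : ∀ v : ℝ, v ≠ 0 →
      pV v = deriv k v * k v / v * Real.exp (-(k v) ^ 2 / 2)) :
    ∀ v : ℝ,
      (∫ u in (0:ℝ)..v, u * pV u) = 1 - Real.exp (-(k v) ^ 2 / 2) ∧
      k v = Real.sign v *
        Real.sqrt (-2 * Real.log (1 - ∫ u in (0:ℝ)..v, u * pV u)) := by
  intro v
  have hintegrand : ∀ᵐ u, u ∈ Set.uIoc 0 v →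
      u * pV u = deriv k u * k u * exp (-k u ^ 2 / 2) := by
    filter_upwards [volume.ae_ne 0] with u hu _
    rw [hpV u hu]
    field_simp
  have hintegral : ∫ u in (0:ℝ)..v, u * pV u = 1 - exp (-k v ^ 2 / 2) := by
    rw [integral_congr_ae hintegrand,
      integral_deriv_mul_mul_exp_neg_sq_half hk hk_mono.monotone hk0]
  refine ⟨hintegral, ?_⟩
  rw [hintegral, sub_sub_cancel, sqrt_neg_two_mul_log_exp_neg_sq_half,
    hk_mono.sign_mul_abs_of_map_zero hk0]
end
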